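/- arXiv:1405.1254 — 10 statements merged into one kernel-verified Lean document; each statement's English description precedes it below -/
import Mathlib

section
/- In the Akerlof procrastination instance—a directed graph with nodes s = v_0, v_1, ..., v_n and t, edges (v_j, v_{j+1}) of cost 0 for 0 ≤ j < n, and edges (v_j, t) of cost μ^j for 0 ≤ j ≤ n, where 1 < μ < b = 1/β—a naive present-biased agent with bias parameter β starting at s traverses the full path v_0, v_1, ..., v_n, t, incurring total cost μ^n, while the shortest s-t path has cost 1. Hence the cost ratio is μ^n, exponential in n. -/
/-- `L` is a path from `v` to `t` in the graph with edge relation `E`. -/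
def IsPathFrom {V : Type*} (E : V → V → Prop) (v t : V) (L : List V) : Prop :=
  L.Chain' E ∧ L.head? = some v ∧ L.getLast? = some t

/-- Total (true) cost of a path, given edge costs `c`. -/
def pathCost {V : Type*} (c : V → V → ℝ) : List V → ℝ
  | a :: b :: rest => c a b + pathCost c (b :: rest)
  | _ => 0

/-- Present-biased perceived cost of a path: first edge at face value,
all later edges discounted by `β`. -/
def perceivedCost {V : Type*} (β : ℝ) (c : V → V → ℝ) : List V → ℝ
  | a :: b :: rest => c a b + β * pathCost c (b :: rest)
  | _ => 0

/-- The traversal of a naive present-biased agent (fixed-goal model): at each node `v ≠ t`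
it follows the first edge of a `v`-`t` path minimizing the perceived cost, then re-plans. -/
inductive AgentPath {V : Type*} (β : ℝ) (E : V → V → Prop) (c : V → V → ℝ) (t : V) :
    V → List V → Prop
  | base : AgentPath β E c t t [t]
  | step {v w : V} {Q L : List V} :
      v ≠ t →
      IsPathFrom E v t (v :: w :: Q) →
      (∀ P, IsPathFrom E v t P →
        perceivedCost β c (v :: w :: Q) ≤ perceivedCost β c P) →
      AgentPath β E c t w L →
      AgentPath β E c t v (v :: L)

/-- `d v` is the true shortest-path distance from `v` to `t`. -/
def IsDist {V : Type*} (E : V → V → Prop) (c : V → V → ℝ) (t : V) (d : V → ℝ) : Prop :=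
  ∀ v, (∃ P, IsPathFrom E v t P ∧ pathCost c P = d v) ∧
    ∀ P, IsPathFrom E v t P → d v ≤ pathCost c P

/-- Edges of the Akerlof instance: `some j` is the state "day `j`, package not sent",
`none` is the goal `t`; edges `v_j → v_{j+1}` and `v_j → t`. -/
def akE (n : ℕ) : Option (Fin (n + 1)) → Option (Fin (n + 1)) → Prop
  | some i, some j => (j : ℕ) = (i : ℕ) + 1
  | some _, none => True
  | _, _ => False

/-- Costs of the Akerlof instance: chain edges cost `0`, the edge `v_j → t` costs `μ ^ j`. -/
def akC (n : ℕ) (μ : ℝ) : Option (Fin (n + 1)) → Option (Fin (n + 1)) → ℝ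
  | some i, none => μ ^ (i : ℕ)
  | _, _ => 0

/-- The full procrastination path `v_0, v_1, …, v_n, t`. -/
def akL (n : ℕ) : List (Option (Fin (n + 1))) :=
  (List.finRange (n + 1)).map some ++ [none]

section Akerlof

variable {n : ℕ} {β μ : ℝ}

@[simp] lemma pathCost_cons_cons {V : Type*} (c : V → V → ℝ) (a b : V) (l : List V) :
    pathCost c (a :: b :: l) = c a b + pathCost c (b :: l) := rfl

@[simp] lemma pathCost_single {V : Type*} (c : V → V → ℝ) (a : V) :
    pathCost c [a] = 0 := rfl

@[simp] lemma perceivedCost_cons_cons {V : Type*} (β : ℝ) (c : V → V → ℝ) (a b : V)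
    (l : List V) : perceivedCost β c (a :: b :: l) = c a b + β * pathCost c (b :: l) := rfl

lemma akE_none_false {y : Option (Fin (n+1))} (h : akE n none y) : False := by
  cases y <;> simp [akE] at h

/-- structure of paths: any path from `some i` to `none` has true cost `μ ^ j` for some
`i ≤ j ≤ n`. -/
lemma ak_path_struct (n : ℕ) (μ : ℝ) :
    ∀ (P : List (Option (Fin (n+1)))) (i : Fin (n+1)),
      P.Chain' (akE n) → P.head? = some (some i) → P.getLast? = some none →
      ∃ j : Fin (n+1), (i : ℕ) ≤ (j : ℕ) ∧ pathCost (akC n μ) P = μ ^ (j : ℕ) := by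
  intro P
  induction P with
  | nil => simp
  | cons a rest ih =>
    intro i hc hh hl
    simp only [List.head?_cons, Option.some.injEq] at hh
    subst hh
    rcases rest with _ | ⟨x, rest'⟩
    · simp at hl
    · simp only [List.Chain', List.isChain_cons_cons] at hc
      obtain ⟨hedge, hc'⟩ := hc
      rw [List.getLast?_cons_cons] at hl
      rcases x with _ | i'
      · rcases rest' with _ | ⟨y, rest''⟩
        · exact ⟨i, le_refl _, by simp [akC]⟩
        · exact absurd (List.isChain_cons_cons.mp hc').1 (fun h => akE_none_false h)
      · have hi' : (i' : ℕ) = (i : ℕ) + 1 := hedge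
        obtain ⟨j, hj1, hj2⟩ := ih i' hc' (by simp) hl
        refine ⟨j, by omega, ?_⟩
        simp [akC, hj2]

/-- case analysis of a path from `some i` to `none`. -/
lemma ak_path_cases {i : Fin (n+1)} {P : List (Option (Fin (n+1)))}
    (hP : IsPathFrom (akE n) (some i) none P) :
    P = [some i, none] ∨
    ∃ (h2 : (i : ℕ) + 1 < n + 1) (rest : List (Option (Fin (n+1)))),
      P = some i :: some ⟨(i : ℕ) + 1, h2⟩ :: rest ∧
      IsPathFrom (akE n) (some ⟨(i : ℕ) + 1, h2⟩) none
        (some ⟨(i : ℕ) + 1, h2⟩ :: rest) := by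
  obtain ⟨hc, hh, hl⟩ := hP
  rcases P with _ | ⟨a, rest⟩
  · simp at hh
  simp only [List.head?_cons, Option.some.injEq] at hh
  subst hh
  rcases rest with _ | ⟨x, rest'⟩
  · simp at hl
  simp only [List.Chain', List.isChain_cons_cons] at hc
  obtain ⟨hedge, hc'⟩ := hc
  rw [List.getLast?_cons_cons] at hl
  rcases x with _ | i'
  · left
    rcases rest' with _ | ⟨y, rest''⟩
    · rfl
    · exact absurd (List.isChain_cons_cons.mp hc').1 (fun h => akE_none_false h)
  · right
    have hi' : (i' : ℕ) = (i : ℕ) + 1 := hedge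
    have h2 : (i : ℕ) + 1 < n + 1 := hi' ▸ i'.isLt
    have : i' = ⟨(i : ℕ) + 1, h2⟩ := Fin.ext hi'
    subst this
    exact ⟨h2, rest', rfl, hc', by simp, hl⟩

/-- the recursively defined tail of the procrastination path -/
def akT (n : ℕ) (k : ℕ) : List (Option (Fin (n+1))) :=
  if h : k < n + 1 then some ⟨k, h⟩ :: akT n (k+1) else []
termination_by n + 1 - k

lemma akT_eq_of_lt {k : ℕ} (h : k < n + 1) :
    akT n k = some ⟨k, h⟩ :: akT n (k+1) := by
  rw [akT]; simp [h]

lemma akT_eq_of_ge {k : ℕ} (h : ¬ k < n + 1) : akT n k = [] := by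
  rw [akT]; simp [h]

lemma akT_eq_drop (n : ℕ) (k : ℕ) :
    akT n k = ((List.finRange (n+1)).drop k).map some := by
  by_cases h : k < n + 1
  · have hlen : k < (List.finRange (n+1)).length := by simpa using h
    rw [akT_eq_of_lt h, akT_eq_drop n (k+1), List.drop_eq_getElem_cons hlen,
      List.map_cons]
    congr 1
    simp [Fin.ext_iff]
  · rw [akT_eq_of_ge h, List.drop_eq_nil_of_le (by simpa using le_of_not_gt h)]
    simp
termination_by n + 1 - k

lemma akL_eq (n : ℕ) : akL n = akT n 0 ++ [none] := by
  rw [akL, akT_eq_drop]; simp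

/-- basic properties of `akT n k ++ [none]` -/
lemma akT_spec (n : ℕ) (μ : ℝ) (k : ℕ) (h : k < n + 1) :
    (akT n k ++ [none]).Chain' (akE n) ∧
    (akT n k ++ [none]).head? = some (some ⟨k, h⟩) ∧
    (akT n k ++ [none]).getLast? = some none ∧
    pathCost (akC n μ) (akT n k ++ [none]) = μ ^ n := by
  by_cases hk : k < n
  · have h2 : k + 1 < n + 1 := by omega
    obtain ⟨hc, hh, hl, hp⟩ := akT_spec n μ (k+1) h2
    have he : akT n k ++ [none] = some ⟨k, h⟩ :: (akT n (k+1) ++ [none]) := by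
      rw [akT_eq_of_lt h, List.cons_append]
    have he2 : akT n (k+1) ++ [none]
        = some ⟨k+1, h2⟩ :: (akT n (k+1+1) ++ [none]) := by
      rw [akT_eq_of_lt h2, List.cons_append]
    rw [he]
    rw [he2] at hc hh hl hp
    refine ⟨?_, by simp, ?_, ?_⟩
    · rw [he2]; simp only [List.Chain', List.isChain_cons_cons]
      exact ⟨by simp [akE], hc⟩
    · rw [he2, List.getLast?_cons_cons]
      exact hl
    · rw [he2, pathCost_cons_cons, hp]
      simp [akC]
  · have hkn : k = n := by omega
    subst hkn
    have he : akT k k ++ [none] = [some ⟨k, h⟩, none] := by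
      rw [akT_eq_of_lt h, akT_eq_of_ge (by omega)]
      rfl
    rw [he]
    refine ⟨?_, by simp, by simp, by simp [akC]⟩
    simp [List.Chain', akE]
termination_by n + 1 - k

lemma ak_beta_mu (hβ0 : 0 < β) (hμb : μ < 1 / β) : β * μ < 1 := by
  have := (lt_div_iff₀ hβ0).mp hμb
  linarith

/-- minimality of the two-step plan at `some k` when `k < n` -/
lemma ak_min (hβ0 : 0 < β) (hμ1 : 1 < μ) (hμb : μ < 1 / β)
    {k : ℕ} (h : k < n + 1) (hk : k < n) (P : List (Option (Fin (n+1))))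
    (hP : IsPathFrom (akE n) (some ⟨k, h⟩) none P) :
    β * μ ^ (k + 1) ≤ perceivedCost β (akC n μ) P := by
  have hβμ : β * μ < 1 := ak_beta_mu hβ0 hμb
  have hμ0 : (0:ℝ) < μ := lt_trans one_pos hμ1
  have hμk : (0:ℝ) < μ ^ k := pow_pos hμ0 k
  rcases ak_path_cases hP with h1 | ⟨h2, rest, hPe, hP'⟩
  · subst h1
    have : perceivedCost β (akC n μ) [some (⟨k, h⟩ : Fin (n+1)), none] = μ ^ k := by
      simp [akC]
    rw [this, pow_succ]
    nlinarith
  · subst hPe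
    obtain ⟨hc', hh', hl'⟩ := hP'
    obtain ⟨j, hj1, hj2⟩ := ak_path_struct n μ _ ⟨k + 1, h2⟩ hc' hh' hl'
    rw [perceivedCost_cons_cons, hj2]
    have h1 : μ ^ (k + 1) ≤ μ ^ (j : ℕ) := pow_le_pow_right₀ (le_of_lt hμ1) hj1
    have : β * μ ^ (k + 1) ≤ β * μ ^ (j : ℕ) :=
      mul_le_mul_of_nonneg_left h1 (le_of_lt hβ0)
    simp only [akC]; linarith

/-- existence of the agent path from each node `some k` -/
lemma ak_agent (hβ0 : 0 < β) (hμ1 : 1 < μ) (hμb : μ < 1 / β)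
    (k : ℕ) (h : k < n + 1) :
    AgentPath β (akE n) (akC n μ) none (some ⟨k, h⟩) (akT n k ++ [none]) := by
  by_cases hk : k < n
  · have h2 : k + 1 < n + 1 := by omega
    have hrec := ak_agent hβ0 hμ1 hμb (k+1) h2
    rw [akT_eq_of_lt h, List.cons_append]
    refine AgentPath.step (Q := [none]) (by simp) ?_ ?_ hrec
    · refine ⟨?_, by simp, by simp⟩
      simp [List.Chain', akE]
    · intro P hP
      have hmin := ak_min hβ0 hμ1 hμb h hk P hP
      have : perceivedCost β (akC n μ)
          [some (⟨k, h⟩ : Fin (n+1)), some ⟨k+1, h2⟩, none] = β * μ ^ (k + 1) := by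
        simp [akC]
      rw [this]
      exact hmin
  · have hkn : k = n := by omega
    subst hkn
    have he : akT k k ++ [none] = [some ⟨k, h⟩, none] := by
      rw [akT_eq_of_lt h, akT_eq_of_ge (by omega)]
      rfl
    rw [he]
    refine AgentPath.step (Q := []) (by simp) ?_ ?_ AgentPath.base
    · exact ⟨by simp [List.Chain', akE], by simp, by simp⟩
    · intro P hP
      rcases ak_path_cases hP with h1 | ⟨h2, _, _, _⟩
      · subst h1; exact le_refl _
      · exact absurd h2 (by simp)
termination_by n + 1 - k

lemma agent_none {V : Type*} {β : ℝ} {E : V → V → Prop} {c : V → V → ℝ} {t : V}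
    {L : List V} (h : AgentPath β E c t t L) : L = [t] := by
  cases h with
  | base => rfl
  | step hne _ _ _ => exact absurd rfl hne

/-- uniqueness of the agent's traversal -/
lemma ak_unique (hβ0 : 0 < β) (hμ1 : 1 < μ) (hμb : μ < 1 / β)
    {v : Option (Fin (n+1))} {L : List (Option (Fin (n+1)))}
    (hA : AgentPath β (akE n) (akC n μ) none v L) :
    ∀ (k : ℕ) (h : k < n + 1), v = some ⟨k, h⟩ → L = akT n k ++ [none] := by
  have hβμ : β * μ < 1 := ak_beta_mu hβ0 hμb
  have hμ0 : (0:ℝ) < μ := lt_trans one_pos hμ1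
  induction hA with
  | base => intro k h hv; exact absurd hv (by simp)
  | @step v w Q L' hne hP hmin hA' ih =>
    intro k h hv
    subst hv
    rcases ak_path_cases hP with h1 | ⟨h2, rest, hPe, _⟩
    · -- chosen plan is the direct edge; forces `k = n`
      have hw : w = none := by
        have := congrArg (fun l => l[1]?) h1
        simpa using this
      by_cases hk : k < n
      · exfalso
        have h2 : k + 1 < n + 1 := by omega
        have hAlt : IsPathFrom (akE n) (some ⟨k, h⟩) none
            [some ⟨k, h⟩, some ⟨k+1, h2⟩, none] :=
          ⟨by simp [List.Chain', akE], by simp, by simp⟩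
        have hle := hmin _ hAlt
        have hQ : Q = [] := by
          have := congrArg (fun l => l.length) h1
          simpa using this
        subst hQ hw
        have e1 : perceivedCost β (akC n μ)
            [some (⟨k, h⟩ : Fin (n+1)), none] = μ ^ k := by simp [akC]
        have e2 : perceivedCost β (akC n μ)
            [some (⟨k, h⟩ : Fin (n+1)), some ⟨k+1, h2⟩, none] = β * μ ^ (k+1) := by
          simp [akC]
        rw [e1, e2] at hle
        have hμk : (0:ℝ) < μ ^ k := pow_pos hμ0 k
        rw [pow_succ] at hle
        nlinarith
      · have hkn : k = n := by omega
        subst hkn hw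
        have : L' = [none] := agent_none hA'
        subst this
        rw [akT_eq_of_lt h, akT_eq_of_ge (by omega)]
        rfl
    · -- chosen plan moves forward; forces `w = some (k+1)`
      have hw : w = some ⟨k + 1, h2⟩ := by
        have := congrArg (fun l => l[1]?) hPe
        simpa using this
      have hL' := ih (k+1) h2 hw
      rw [hL', akT_eq_of_lt h, List.cons_append]

end Akerlof

/-- In the Akerlof instance with `1 < μ < b = 1/β`, the present-biased agent traverses the
full path `v_0, …, v_n, t` (and this is its unique traversal), incurring total cost `μ ^ n`,
while the shortest `s`-`t` path is the direct edge of cost `1`; so the cost ratio is `μ ^ n`. -/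
theorem akerlof_cost_ratio (n : ℕ) (β μ : ℝ)
    (hβ0 : 0 < β) (hβ1 : β < 1) (hμ1 : 1 < μ) (hμb : μ < 1 / β) :
    AgentPath β (akE n) (akC n μ) none (some 0) (akL n) ∧
    (∀ L, AgentPath β (akE n) (akC n μ) none (some 0) L → L = akL n) ∧
    pathCost (akC n μ) (akL n) = μ ^ n ∧
    IsPathFrom (akE n) (some 0) none [some 0, none] ∧
    pathCost (akC n μ) [some 0, none] = 1 ∧
    (∀ P, IsPathFrom (akE n) (some 0) none P → 1 ≤ pathCost (akC n μ) P) := by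
  have h0 : (0:ℕ) < n + 1 := Nat.succ_pos n
  have hs0 : (some (0 : Fin (n+1))) = some (⟨0, h0⟩ : Fin (n+1)) := by
    simp [Fin.ext_iff]
  obtain ⟨hc0, hh0, hl0, hp0⟩ := akT_spec n μ 0 h0
  refine ⟨?_, ?_, ?_, ?_, ?_, ?_⟩
  · rw [akL_eq, hs0]
    exact ak_agent hβ0 hμ1 hμb 0 h0
  · intro L hL
    rw [akL_eq]
    exact ak_unique hβ0 hμ1 hμb hL 0 h0 hs0
  · rw [akL_eq]; exact hp0
  · exact ⟨by simp [List.Chain', akE], by simp, by simp⟩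
  · simp [akC]
  · intro P hP
    obtain ⟨hc, hh, hl⟩ := hP
    obtain ⟨j, _, hj⟩ := ak_path_struct n μ P 0 hc hh hl
    rw [hj]
    exact one_le_pow₀ (le_of_lt hμ1)
end

section
/- Let G be a directed acyclic graph with positive edge costs in which every node lies on some s-t path, and let β ∈ (0,1] with b = 1/β. Define the rank r(v) of a node v as 0 if d(v,t) ≤ d(s,t), and otherwise the minimum integer j > 0 with d(v,t) ≤ b^j · d(s,t). If (v,w) is an edge on the path traversed by a naive present-biased agent with parameter β, then r(w) ≤ r(v) + 1. -/
/-- `r` is the rank function: `r v = 0` if `d v ≤ d s`, and otherwise `r v` is the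
least `j > 0` with `d v ≤ b ^ j * d s`. -/
def IsRank {V : Type*} (b : ℝ) (d : V → ℝ) (s : V) (r : V → ℕ) : Prop :=
  ∀ v, (d v ≤ d s → r v = 0) ∧
    (d s < d v → 0 < r v ∧ d v ≤ b ^ (r v) * d s ∧
      ∀ j : ℕ, 0 < j → d v ≤ b ^ j * d s → r v ≤ j)

lemma agent_head {V : Type*} {β : ℝ} {E : V → V → Prop} {c : V → V → ℝ} {t v : V} {L : List V}
    (h : AgentPath β E c t v L) : L.head? = some v := by
  cases h <;> rfl

lemma pathCost_nonneg {V : Type*} {E : V → V → Prop} {c : V → V → ℝ}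
    (hpos : ∀ v w, E v w → 0 < c v w) :
    ∀ L : List V, L.Chain' E → 0 ≤ pathCost c L
  | [], _ => le_refl _
  | [_], _ => le_refl _
  | a :: b :: rest, h => by
    rw [List.Chain', List.isChain_cons_cons] at h
    have h1 := pathCost_nonneg hpos (b :: rest) h.2
    have h2 := hpos a b h.1
    show 0 ≤ c a b + pathCost c (b :: rest)
    linarith

lemma step_ineq {V : Type*} {E : V → V → Prop} {c : V → V → ℝ} {t : V}
    {β : ℝ} {d : V → ℝ} (hβ0 : 0 < β) (hβ1 : β ≤ 1)
    (hpos : ∀ v w, E v w → 0 < c v w) (hd : IsDist E c t d)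
    {v w : V} {Q : List V} (hne : v ≠ t) (hpath : IsPathFrom E v t (v :: w :: Q))
    (hmin : ∀ P, IsPathFrom E v t P →
      perceivedCost β c (v :: w :: Q) ≤ perceivedCost β c P) :
    β * d w ≤ d v := by
  obtain ⟨P, hP, hPc⟩ := (hd v).1
  obtain ⟨hPch, hPh, hPl⟩ := hP
  rcases P with _ | ⟨a, rest⟩
  · simp at hPh
  · obtain rfl : a = v := by simpa using hPh
    rcases rest with _ | ⟨x, Q'⟩
    · exact absurd (by simpa using hPl) hne
    · rw [List.Chain', List.isChain_cons_cons] at hPch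
      have hrest : 0 ≤ pathCost c (x :: Q') := pathCost_nonneg hpos _ hPch.2
      have hcost : c a x + pathCost c (x :: Q') = d a := hPc
      have hperc : perceivedCost β c (a :: x :: Q') ≤ d a := by
        show c a x + β * pathCost c (x :: Q') ≤ d a
        nlinarith
      have hmin' := le_trans (hmin _ ⟨List.isChain_cons_cons.mpr hPch, rfl, hPl⟩) hperc
      have hEvw : E a w := (List.isChain_cons_cons.mp hpath.1).1
      have hwQ : IsPathFrom E w t (w :: Q) :=
        ⟨(List.isChain_cons_cons.mp hpath.1).2, rfl, by
          have := hpath.2.2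
          rwa [List.getLast?_cons_cons] at this⟩
      have hdw : d w ≤ pathCost c (w :: Q) := (hd w).2 _ hwQ
      have hcw : 0 < c a w := hpos _ _ hEvw
      have hmin'' : c a w + β * pathCost c (w :: Q) ≤ d a := hmin'
      nlinarith

lemma agent_edge {V : Type*} {E : V → V → Prop} {c : V → V → ℝ} {t : V}
    {β : ℝ} {d : V → ℝ} (hβ0 : 0 < β) (hβ1 : β ≤ 1)
    (hpos : ∀ v w, E v w → 0 < c v w) (hd : IsDist E c t d)
    {u : V} {L : List V} (h : AgentPath β E c t u L)
    {v w : V} (hvw : [v, w] <:+: L) : β * d w ≤ d v := by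
  induction h with
  | base => simpa using hvw.sublist.length_le
  | @step v0 w0 Q L0 hne hpath hmin hrec ih =>
    obtain ⟨p, sfx, hps⟩ := hvw
    rcases p with _ | ⟨a, p'⟩
    · injection hps with h1 h2
      subst h1
      have hw : w = w0 := by
        have := agent_head hrec
        rw [← h2] at this
        simpa using this
      subst hw
      exact step_ineq hβ0 hβ1 hpos hd hne hpath hmin
    · injection hps with h1 h2
      exact ih ⟨p', sfx, h2⟩

/-- Claim (A) of Theorem 1: along any edge `(v, w)` of the path traversed by a naive
present-biased agent, the rank increases by at most one. -/
theorem rank_step {V : Type*} (E : V → V → Prop) (c : V → V → ℝ) (s t : V)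
    (β b : ℝ) (d : V → ℝ) (r : V → ℕ) (L : List V)
    (hβ0 : 0 < β) (hβ1 : β ≤ 1) (hb : b = 1 / β)
    (hpos : ∀ v w, E v w → 0 < c v w)
    (hcover : ∀ v, ∃ P, IsPathFrom E s t P ∧ v ∈ P)
    (hd : IsDist E c t d)
    (hr : IsRank b d s r)
    (hL : AgentPath β E c t s L)
    (v w : V) (hvw : [v, w] <:+: L) :
    r w ≤ r v + 1 := by
  have hkey : β * d w ≤ d v := agent_edge hβ0 hβ1 hpos hd hL hvw
  have hbpos : 0 < b := by rw [hb]; positivity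
  have hdw : d w ≤ b * d v := by
    rw [hb]
    rw [div_mul_eq_mul_div, le_div_iff₀ hβ0]
    linarith
  rcases le_or_gt (d w) (d s) with hws | hws
  · simp [((hr w).1 hws)]
  · -- d s < d w
    have hrw := (hr w).2 hws
    apply hrw.2.2 (r v + 1) (Nat.succ_pos _)
    rcases le_or_gt (d v) (d s) with hvs | hvs
    · have : r v = 0 := (hr v).1 hvs
      rw [this]
      calc d w ≤ b * d v := hdw
        _ ≤ b * d s := by nlinarith
        _ = b ^ (0 + 1) * d s := by ring
    · have hrv := (hr v).2 hvs
      calc d w ≤ b * d v := hdw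
        _ ≤ b * (b ^ (r v) * d s) := by nlinarith [hrv.2.1]
        _ = b ^ (r v + 1) * d s := by ring
end

section
/- Let G be a directed acyclic graph with positive edge costs and let β ∈ (0,1) with b = 1/β. If an agent at node v chooses to traverse an edge (v,w) with c(v,w) > b^k · d(s,t) for an integer k ≥ 1, then d(v,t) > b^k · d(s,t); in particular the rank of v is at least k. -/
/-- Claim (C) of Theorem 1: if the agent at `v` chooses an edge `(v, w)` of cost greater than
`b ^ k · d(s,t)` (with `k ≥ 1`), then `d(v,t) > b ^ k · d(s,t)`, and hence `r v ≥ k`. -/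
theorem expensive_choice_high_rank {V : Type*} (E : V → V → Prop) (c : V → V → ℝ)
    (s t : V) (β b : ℝ) (d : V → ℝ) (r : V → ℕ) (v w : V) (k : ℕ)
    (hβ0 : 0 < β) (hβ1 : β < 1) (hb : b = 1 / β)
    (hdnn : ∀ x, 0 ≤ d x) (hds : 0 < d s)
    (hfirst : ∃ w', E v w' ∧ d v = c v w' + d w')
    (hcnn : ∀ x y, E x y → 0 ≤ c x y)
    (hedge : E v w)
    (hchoice : ∀ x, E v x → c v w + β * d w ≤ c v x + β * d x)
    (hk : 1 ≤ k)
    (hr : IsRank b d s r)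
    (hc : b ^ k * d s < c v w) :
    b ^ k * d s < d v ∧ k ≤ r v := by
  obtain ⟨w', hEw', hdv⟩ := hfirst
  have hb1 : 1 < b := by
    rw [hb]; rw [one_lt_div hβ0]; exact hβ1
  have hdv_gt : b ^ k * d s < d v := by
    have h1 : c v w + β * d w ≤ c v w' + β * d w' := hchoice w' hEw'
    have h2 : c v w ≤ c v w + β * d w := by nlinarith [hdnn w]
    have h3 : c v w' + β * d w' ≤ c v w' + d w' := by nlinarith [hdnn w']
    linarith
  refine ⟨hdv_gt, ?_⟩
  have hbk : 1 < b ^ k := one_lt_pow₀ hb1 (by omega)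
  have hds_lt : d s < d v := by nlinarith
  obtain ⟨_, _, hmin⟩ := (hr v).2 hds_lt
  by_contra h
  push_neg at h
  have hrv : 0 < r v ∧ d v ≤ b ^ (r v) * d s ∧ _ := (hr v).2 hds_lt
  have hle : b ^ (r v) ≤ b ^ k := pow_le_pow_right₀ (le_of_lt hb1) (by omega)
  nlinarith [hrv.2.1]
end

section
/- Let P be a path in a directed acyclic graph G ending at a node v, let v_j be the last node on P of rank j, and let Q_j be a shortest v_j-t path. If all nodes on P after v_j have rank greater than j and every node on Q_j has rank at most j, then Q_j intersects P only in the node v_j. -/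
/-- Claim (D) of Theorem 1: if `v_j` is the last node of rank `j` on the path
`P = P₁ ++ v_j :: P₂` (so every node after `v_j` on `P` has rank `> j`), `Q` is a
(shortest) `v_j`-`t` path all of whose nodes have rank `≤ j`, and the graph is acyclic
(witnessed by a topological order `f`), then `Q` meets `P` only in `v_j`. -/
theorem bypass_meets_path_once {V : Type*} (E : V → V → Prop) (f : V → ℕ) (r : V → ℕ)
    (t vj : V) (P1 P2 Q : List V) (j : ℕ)
    (htopo : ∀ v w, E v w → f v < f w)
    (hP : (P1 ++ vj :: P2).Chain' E)
    (hafter : ∀ x ∈ P2, j < r x)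
    (hQ : IsPathFrom E vj t Q)
    (hQrank : ∀ x ∈ Q, r x ≤ j) :
    ∀ x, x ∈ Q → x ∈ P1 ++ vj :: P2 → x = vj := by
  obtain ⟨hQchain, hQhead, -⟩ := hQ
  -- Q = vj :: Q'
  obtain ⟨Q', rfl⟩ : ∃ Q', Q = vj :: Q' := by
    cases Q with
    | nil => simp at hQhead
    | cons a l =>
      simp only [List.head?_cons, Option.some.injEq] at hQhead
      exact ⟨l, by rw [hQhead]⟩
  -- pairwise f-increasing along chains
  haveI : IsTrans V fun a b => f a < f b := ⟨fun _ _ _ => Nat.lt_trans⟩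
  have hPpair : (P1 ++ vj :: P2).Pairwise (fun a b => f a < f b) := by
    rw [← List.isChain_iff_pairwise]
    exact hP.imp (fun a b h => htopo a b h)
  have hQpair : ((vj :: Q')).Pairwise (fun a b => f a < f b) := by
    rw [← List.isChain_iff_pairwise]
    exact hQchain.imp (fun a b h => htopo a b h)
  intro x hxQ hxP
  -- from Q: x = vj or f vj < f x
  rcases List.mem_cons.mp hxQ with rfl | hxQ'
  · rfl
  · have hfx : f vj < f x := (List.pairwise_cons.mp hQpair).1 x hxQ'
    rcases List.mem_append.mp hxP with hx1 | hx2
    · -- x ∈ P1 : f x < f vj, contradiction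
      have : f x < f vj := by
        have := List.pairwise_append.mp hPpair
        exact this.2.2 x hx1 vj List.mem_cons_self
      omega
    · rcases List.mem_cons.mp hx2 with rfl | hx2'
      · omega
      · have h1 : j < r x := hafter x hx2'
        have h2 : r x ≤ j := hQrank x hxQ
        omega
end

section
/- In the homework-deadline instance (Figure: grid nodes v_{ij} for weeks i = 0..3 and completed projects j = 0..2, s = v_{00}, t = v_{32}; edges go from column i to i+1, with cost 1 for staying in the same row, 4 for descending one row, 9 for descending two rows; reward 16 at t; β = 1/2): the agent in the full graph follows s → v_{10} → v_{20} and then quits (since 9 > β·16 = 8), but in the subgraph with node v_{20} deleted, the agent follows s → v_{10} → v_{21} → t and reaches the goal. Hence deleting a node from the graph can turn a non-motivating instance into a motivating one. -/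
/-- Reward-model traversal: at each node the agent either quits (when every remaining
path's perceived cost exceeds `β * r`) or follows the first edge of the minimum
perceived-cost path.  The boolean records whether `t` was reached. -/
inductive RAgent {V : Type*} (β r : ℝ) (E : V → V → Prop) (c : V → V → ℝ) (t : V) :
    V → List V → Bool → Prop
  | reach : RAgent β r E c t t [t] true
  | quit {v : V} : v ≠ t →
      (∀ P, IsPathFrom E v t P → β * r < perceivedCost β c P) →
      RAgent β r E c t v [v] false
  | step {v w : V} {Q L : List V} {b : Bool} :
      v ≠ t →
      IsPathFrom E v t (v :: w :: Q) →
      perceivedCost β c (v :: w :: Q) ≤ β * r →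
      (∀ P, IsPathFrom E v t P →
        perceivedCost β c (v :: w :: Q) ≤ perceivedCost β c P) →
      RAgent β r E c t w L b →
      RAgent β r E c t v (v :: L) b

/-- Edges of the homework-deadline instance: node `(i, j)` means `i` weeks done and `j`
projects done; edges advance one week, never lose projects, and end at `j ≤ 2`. -/
def GE : ℕ × ℕ → ℕ × ℕ → Prop := fun p q =>
  q.1 = p.1 + 1 ∧ p.1 < 3 ∧ p.2 ≤ q.2 ∧ q.2 ≤ 2 ∧ q.2 ≤ p.2 + 2

/-- Costs: a week with no project costs 1, with one project 4, with two projects 9. -/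
def Gc : ℕ × ℕ → ℕ × ℕ → ℝ := fun p q =>
  if q.2 = p.2 then 1 else if q.2 = p.2 + 1 then 4 else 9

/-- The graph with the node `v₂₀ = (2,0)` deleted (the intermediate deadline). -/
def GE' : ℕ × ℕ → ℕ × ℕ → Prop := fun p q => GE p q ∧ p ≠ (2, 0) ∧ q ≠ (2, 0)

lemma path_shape3 {v : ℕ × ℕ} {P : List (ℕ × ℕ)} (h : IsPathFrom GE v (3,2) P)
    (hv : v.1 = 3) : v = (3,2) ∧ P = [(3,2)] := by
  obtain ⟨hc, hh, hl⟩ := h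
  match P with
  | [] => simp at hh
  | [a] =>
    simp at hh hl
    subst hh; subst hl; exact ⟨rfl, rfl⟩
  | a :: b :: Q =>
    simp at hh; subst hh
    rw [List.Chain', List.isChain_cons_cons] at hc
    have := hc.1.2.1
    omega

lemma path_shape2 {v : ℕ × ℕ} {P : List (ℕ × ℕ)} (h : IsPathFrom GE v (3,2) P)
    (hv : v.1 = 2) : GE v (3,2) ∧ P = [v, (3,2)] := by
  obtain ⟨hc, hh, hl⟩ := h
  match P with
  | [] => simp at hh
  | [a] =>
    simp at hh hl
    subst hh; subst hl; simp at hv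
  | a :: b :: Q =>
    simp at hh; subst hh
    rw [List.Chain', List.isChain_cons_cons] at hc
    have hb : b.1 = 3 := by have := hc.1.1; omega
    have hP : IsPathFrom GE b (3,2) (b :: Q) :=
      ⟨hc.2, rfl, by simpa using hl⟩
    obtain ⟨hb2, hQ⟩ := path_shape3 hP hb
    rw [List.cons.injEq] at hQ
    refine ⟨hb2 ▸ hc.1, ?_⟩
    rw [hQ.2, hb2]

lemma path_shape1 {v : ℕ × ℕ} {P : List (ℕ × ℕ)} (h : IsPathFrom GE v (3,2) P)
    (hv : v.1 = 1) : ∃ w, GE v w ∧ GE w (3,2) ∧ P = [v, w, (3,2)] := by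
  obtain ⟨hc, hh, hl⟩ := h
  match P with
  | [] => simp at hh
  | [a] =>
    simp at hh hl
    subst hh; subst hl; simp at hv
  | a :: b :: Q =>
    simp at hh; subst hh
    rw [List.Chain', List.isChain_cons_cons] at hc
    have hb : b.1 = 2 := by have := hc.1.1; omega
    have hP : IsPathFrom GE b (3,2) (b :: Q) :=
      ⟨hc.2, rfl, by simpa using hl⟩
    obtain ⟨hb2, hQ⟩ := path_shape2 hP hb
    rw [List.cons.injEq] at hQ
    exact ⟨b, hc.1, hb2, by rw [hQ.2]⟩

lemma path_shape0 {v : ℕ × ℕ} {P : List (ℕ × ℕ)} (h : IsPathFrom GE v (3,2) P)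
    (hv : v.1 = 0) : ∃ w u, GE v w ∧ GE w u ∧ GE u (3,2) ∧ P = [v, w, u, (3,2)] := by
  obtain ⟨hc, hh, hl⟩ := h
  match P with
  | [] => simp at hh
  | [a] =>
    simp at hh hl
    subst hh; subst hl; simp at hv
  | a :: b :: Q =>
    simp at hh; subst hh
    rw [List.Chain', List.isChain_cons_cons] at hc
    have hb : b.1 = 1 := by have := hc.1.1; omega
    have hP : IsPathFrom GE b (3,2) (b :: Q) :=
      ⟨hc.2, rfl, by simpa using hl⟩
    obtain ⟨w, h1, h2, hQ⟩ := path_shape1 hP hb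
    rw [List.cons.injEq] at hQ
    exact ⟨b, w, hc.1, h1, h2, by rw [hQ.2]⟩

lemma isPathFrom_mono {v t : ℕ × ℕ} {P : List (ℕ × ℕ)}
    (h : IsPathFrom GE' v t P) : IsPathFrom GE v t P :=
  ⟨h.1.imp (fun _ _ hpq => hpq.1), h.2.1, h.2.2⟩


/-- The homework-deadline example (`β = 1/2`, reward 16): in the full graph the agent
follows `s → v₁₀ → v₂₀` and then quits (since `9 > 8`), while after deleting `v₂₀`
it follows `s → v₁₀ → v₂₁ → t` and reaches the goal — so deleting a node can turn a
non-motivating instance into a motivating one. -/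
theorem deadline_example :
    RAgent (1 / 2) 16 GE Gc (3, 2) (0, 0) [(0, 0), (1, 0), (2, 0)] false ∧
    RAgent (1 / 2) 16 GE' Gc (3, 2) (0, 0) [(0, 0), (1, 0), (2, 1), (3, 2)] true := by
  have hGE1 : IsPathFrom GE (0,0) (3,2) [(0,0),(1,0),(2,1),(3,2)] := by
    refine ⟨?_, rfl, rfl⟩
    simp [List.Chain', List.isChain_cons_cons, GE]
  have hmin0 : ∀ P, IsPathFrom GE ((0:ℕ),(0:ℕ)) (3,2) P →
      perceivedCost (1/2) Gc [(0,0),(1,0),(2,1),(3,2)] ≤ perceivedCost (1/2) Gc P := by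
    intro P hP
    obtain ⟨w, u, h1, h2, h3, rfl⟩ := path_shape0 hP rfl
    obtain ⟨w1, w2⟩ := w
    obtain ⟨u1, u2⟩ := u
    obtain ⟨hw1, -, hw2, hw3, -⟩ := h1
    obtain ⟨hu1, -, hu2, hu3, hu4⟩ := h2
    simp only at hw1 hw2 hw3 hu1 hu2 hu3 hu4
    subst hw1; subst hu1
    interval_cases w2 <;> interval_cases u2 <;>
      simp [perceivedCost, pathCost, Gc] <;> norm_num
  have hquit : ∀ P, IsPathFrom GE ((2:ℕ),(0:ℕ)) (3,2) P →
      (1/2 : ℝ) * 16 < perceivedCost (1/2) Gc P := by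
    intro P hP
    obtain ⟨-, rfl⟩ := path_shape2 hP rfl
    simp [perceivedCost, pathCost, Gc]
    norm_num
  constructor
  · refine RAgent.step (w := (1,0)) (by decide) hGE1 ?_ hmin0 ?_
    · simp [perceivedCost, pathCost, Gc]; norm_num
    · refine RAgent.step (w := (2,0)) (Q := [(3,2)]) (by decide) ?_ ?_ ?_ ?_
      · exact ⟨by simp [List.Chain', List.isChain_cons_cons, GE], rfl, rfl⟩
      · simp [perceivedCost, pathCost, Gc]; norm_num
      · intro P hP
        obtain ⟨w, h1, h2, rfl⟩ := path_shape1 hP rfl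
        obtain ⟨w1, w2⟩ := w
        obtain ⟨hw1, -, hw2, hw3, -⟩ := h1
        simp only at hw1 hw2 hw3
        subst hw1
        interval_cases w2 <;> simp [perceivedCost, pathCost, Gc] <;> norm_num
      · exact RAgent.quit (by decide) hquit
  · refine RAgent.step (w := (1,0)) (Q := [(2,1),(3,2)]) (by decide) ?_ ?_ ?_ ?_
    · exact ⟨by simp [List.Chain', List.isChain_cons_cons, GE', GE] <;> decide, rfl, rfl⟩
    · simp [perceivedCost, pathCost, Gc]; norm_num
    · intro P hP
      exact hmin0 P (isPathFrom_mono hP)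
    · refine RAgent.step (w := (2,1)) (Q := [(3,2)]) (by decide) ?_ ?_ ?_ ?_
      · exact ⟨by simp [List.Chain', List.isChain_cons_cons, GE', GE] <;> decide, rfl, rfl⟩
      · simp [perceivedCost, pathCost, Gc]; norm_num
      · intro P hP
        obtain ⟨w, h1, h2, hPeq⟩ := path_shape1 (isPathFrom_mono hP) rfl
        have hne : w ≠ (2, 0) := by
          have hc := hP.1
          rw [hPeq] at hc
          rw [List.Chain', List.isChain_cons_cons] at hc
          exact hc.1.2.2
        subst hPeq
        obtain ⟨w1, w2⟩ := w
        obtain ⟨hw1, -, hw2, hw3, -⟩ := h1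
        simp only at hw1 hw2 hw3
        subst hw1
        have hw0 : w2 ≠ 0 := fun h => hne (by subst h; rfl)
        interval_cases w2 <;>
          first
          | exact absurd rfl hw0
          | (simp [perceivedCost, pathCost, Gc] <;> norm_num)
      · refine RAgent.step (w := (3,2)) (Q := []) (by decide) ?_ ?_ ?_ ?_
        · exact ⟨by simp [List.Chain', List.isChain_cons_cons, GE', GE] <;> decide, rfl, rfl⟩
        · simp [perceivedCost, pathCost, Gc]; norm_num
        · intro P hP
          obtain ⟨-, rfl⟩ := path_shape2 (isPathFrom_mono hP) rfl
          simp [perceivedCost, pathCost, Gc]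
        · exact RAgent.reach
end

section
/- There exists a directed acyclic graph G with positive edge costs, reward r at t, and bias parameter β (e.g. β = 1/2) such that G is a motivating subgraph of itself but no proper subgraph of G is motivating; in particular, no single s-t path of G is motivating. Such G can be realized on 5 nodes s, a, b, c, t with paths s-a-b-t and s-a-c-t, where the agent at s plans the path through b, but upon reaching a switches to the path through c, and removing either of the edges (a,b) or (a,c) (or any other edge) causes the agent either never to leave s or to quit at a. -/
/-- The five nodes of the minimal-motivating-subgraph example. -/
inductive MV where
  | s : MV
  | a : MV
  | b : MV
  | c : MV
  | t : MV

/-- Edges `s → a`, `a → b`, `a → c`, `b → t`, `c → t`. -/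
def ME : MV → MV → Prop := fun x y =>
  (x = .s ∧ y = .a) ∨ (x = .a ∧ y = .b) ∨ (x = .a ∧ y = .c) ∨
  (x = .b ∧ y = .t) ∨ (x = .c ∧ y = .t)

def mco : MV → MV → ℝ := fun x y =>
  match x, y with
  | .s, .a => 2
  | .a, .b => 5
  | .b, .t => 1
  | .a, .c => 2
  | .c, .t => 5
  | _, _ => 1

lemma path_char : ∀ (L : List MV) (v : MV), List.Chain' ME L →
    L.head? = some v → L.getLast? = some MV.t →
    (v = .t ∧ L = [.t]) ∨ (v = .b ∧ L = [.b, .t]) ∨ (v = .c ∧ L = [.c, .t]) ∨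
    (v = .a ∧ (L = [.a, .b, .t] ∨ L = [.a, .c, .t])) ∨
    (v = .s ∧ (L = [.s, .a, .b, .t] ∨ L = [.s, .a, .c, .t])) := by
  intro L
  induction L with
  | nil => intro v _ hh _; simp at hh
  | cons x L ih =>
    intro v hch hh hl
    simp only [List.head?_cons, Option.some.injEq] at hh
    subst hh
    cases L with
    | nil =>
      simp only [List.getLast?_singleton, Option.some.injEq] at hl
      subst hl; left; exact ⟨rfl, rfl⟩
    | cons y L' =>
      rw [List.Chain', List.isChain_cons_cons] at hch
      obtain ⟨hxy, hch'⟩ := hch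
      rw [List.getLast?_cons_cons] at hl
      have h := ih y hch' rfl hl
      rcases hxy with ⟨hx, hy⟩ | ⟨hx, hy⟩ | ⟨hx, hy⟩ | ⟨hx, hy⟩ | ⟨hx, hy⟩ <;>
        subst hx <;> subst hy <;>
        rcases h with ⟨h1, h2⟩ | ⟨h1, h2⟩ | ⟨h1, h2⟩ | ⟨h1, h2 | h2⟩ | ⟨h1, h2 | h2⟩ <;>
        simp_all

lemma isPath_mono {E' : MV → MV → Prop} (hsub : ∀ x y, E' x y → ME x y)
    {v : MV} {P : List MV} (h : IsPathFrom E' v .t P) : IsPathFrom ME v .t P :=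
  ⟨h.1.imp (fun u v huv => hsub u v huv), h.2.1, h.2.2⟩

lemma path_sabt : IsPathFrom ME .s .t [.s, .a, .b, .t] := by
  refine ⟨?_, rfl, rfl⟩
  simp [List.Chain', List.isChain_cons_cons, ME]

lemma path_act : IsPathFrom ME .a .t [.a, .c, .t] := by
  refine ⟨?_, rfl, rfl⟩
  simp [List.Chain', List.isChain_cons_cons, ME]

lemma path_ct : IsPathFrom ME .c .t [.c, .t] := by
  refine ⟨?_, rfl, rfl⟩
  simp [List.Chain', List.isChain_cons_cons, ME]

/-- There is a graph (on the 5 nodes `s, a, b, c, t`, with paths `s-a-b-t` and `s-a-c-t`),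
with positive edge costs and a reward `r`, such that with bias `β = 1/2` the full graph
motivates the agent to reach `t`, but no proper subgraph does — in particular no single
`s`-`t` path is motivating.  (The agent plans through `b` but switches to `c` at `a`.) -/
theorem minimal_motivating_subgraph_example :
    ∃ (co : MV → MV → ℝ) (r : ℝ),
      (∀ x y, ME x y → 0 < co x y) ∧ 0 < r ∧
      (∃ L, RAgent (1 / 2) r ME co .t .s L true) ∧
      (∀ E' : MV → MV → Prop, (∀ x y, E' x y → ME x y) → E' ≠ ME →
        ¬ ∃ L, RAgent (1 / 2) r E' co .t .s L true) := by
  refine ⟨mco, 10, ?_, by norm_num, ?_, ?_⟩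
  · intro x y _; cases x <;> cases y <;> norm_num [mco]
  · -- positive: the full graph motivates
    have hc : RAgent (1/2) 10 ME mco .t .c [.c, .t] true := by
      refine RAgent.step (by simp) path_ct (by norm_num [perceivedCost, pathCost, mco]) ?_
        RAgent.reach
      intro P hP
      rcases path_char P .c hP.1 hP.2.1 hP.2.2 with ⟨h1, _⟩ | ⟨h1, _⟩ | ⟨_, h2⟩ |
        ⟨h1, _⟩ | ⟨h1, _⟩ <;> first
        | exact MV.noConfusion h1
        | (subst h2; norm_num [perceivedCost, pathCost, mco])
    have ha : RAgent (1/2) 10 ME mco .t .a [.a, .c, .t] true := by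
      refine RAgent.step (by simp) path_act (by norm_num [perceivedCost, pathCost, mco]) ?_ hc
      intro P hP
      rcases path_char P .a hP.1 hP.2.1 hP.2.2 with ⟨h1, _⟩ | ⟨h1, _⟩ | ⟨h1, _⟩ |
        ⟨_, h2 | h2⟩ | ⟨h1, _⟩ <;> first
        | exact MV.noConfusion h1
        | (subst h2; norm_num [perceivedCost, pathCost, mco])
    refine ⟨[.s, .a, .c, .t], ?_⟩
    refine RAgent.step (by simp) path_sabt (by norm_num [perceivedCost, pathCost, mco]) ?_ ha
    intro P hP
    rcases path_char P .s hP.1 hP.2.1 hP.2.2 with ⟨h1, _⟩ | ⟨h1, _⟩ | ⟨h1, _⟩ |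
      ⟨h1, _⟩ | ⟨_, h2 | h2⟩ <;> first
      | exact MV.noConfusion h1
      | (subst h2; norm_num [perceivedCost, pathCost, mco])
  · -- negative: no proper subgraph motivates
    rintro E' hsub hne ⟨L, hL⟩
    have hmiss : ∃ x y, ME x y ∧ ¬ E' x y := by
      by_contra h
      push_neg at h
      exact hne (funext fun x => funext fun y =>
        propext ⟨hsub x y, fun h' => h x y h'⟩)
    -- invert the first step at s
    cases hL with
    | step hne' hpath hle hmin hrest =>
      rename_i w Q L'
      have hME := isPath_mono hsub hpath
      have hchar := path_char _ _ hME.1 hME.2.1 hME.2.2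
      -- the path from s is [s,a,b,t] or [s,a,c,t]
      rcases hchar with ⟨h1, _⟩ | ⟨h1, _⟩ | ⟨h1, _⟩ | ⟨h1, _⟩ | ⟨_, h2 | h2⟩
      · exact MV.noConfusion h1
      · exact MV.noConfusion h1
      · exact MV.noConfusion h1
      · exact MV.noConfusion h1
      · -- chosen path at s is [s,a,b,t]
        injection h2 with _ h2
        injection h2 with hw hQ
        subst hw; subst hQ
        have hedges := hpath.1
        simp only [List.Chain', List.isChain_cons_cons, List.isChain_singleton, and_true] at hedges
        obtain ⟨hsa, hab, hbt⟩ := hedges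
        -- now look at second step at a
        cases hrest with
        | step hne2 hpath2 hle2 hmin2 hrest2 =>
          rename_i w2 Q2 L2
          have hME2 := isPath_mono hsub hpath2
          have hchar2 := path_char _ _ hME2.1 hME2.2.1 hME2.2.2
          rcases hchar2 with ⟨h1, _⟩ | ⟨h1, _⟩ | ⟨h1, _⟩ | ⟨_, h2 | h2⟩ | ⟨h1, _⟩
          case step.inl => exact MV.noConfusion h1
          case step.inr.inl => exact MV.noConfusion h1
          case step.inr.inr.inl => exact MV.noConfusion h1
          case step.inr.inr.inr.inr => exact MV.noConfusion h1
          · -- chosen at a is [a,b,t]: perceived 5.5 ≤ 5, impossible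
            injection h2 with _ h2
            injection h2 with hw2 hQ2
            subst hw2; subst hQ2
            norm_num [perceivedCost, pathCost, mco] at hle2
          · -- chosen at a is [a,c,t]: contains edges a→c and c→t
            injection h2 with _ h2
            injection h2 with hw2 hQ2
            subst hw2; subst hQ2
            have hedges2 := hpath2.1
            simp only [List.Chain', List.isChain_cons_cons, List.isChain_singleton, and_true] at hedges2
            obtain ⟨hac, hct⟩ := hedges2
            -- all five edges are present in E', so E' = ME, contradiction
            obtain ⟨x, y, hxy, hnot⟩ := hmiss
            rcases hxy with ⟨hx, hy⟩ | ⟨hx, hy⟩ | ⟨hx, hy⟩ | ⟨hx, hy⟩ | ⟨hx, hy⟩ <;>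
              subst hx <;> subst hy <;>
              first
              | exact hnot hsa
              | exact hnot hab
              | exact hnot hbt
              | exact hnot hac
              | exact hnot hct
      · -- chosen path at s is [s,a,c,t]: perceived 5.5 ≤ 5, impossible
        injection h2 with _ h2
        injection h2 with hw hQ
        subst hw; subst hQ
        norm_num [perceivedCost, pathCost, mco] at hle
end

section
/- If G* is a minimal motivating subgraph with start node s and goal t, and P* is the s-t path the agent actually traverses in G*, then every edge of G* either lies on P* or lies on a P*-bypass in G* (a path whose first and last nodes are on P* and no other nodes are). -/
/-- `Q` is a `P`-bypass: a path in `E` whose first and last nodes lie on `P` and whose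
interior nodes avoid `P`. -/
def IsBypass {V : Type*} (E : V → V → Prop) (P Q : List V) : Prop :=
  Q.Chain' E ∧ ∃ (a l : V) (M : List V),
    Q = a :: M ++ [l] ∧ a ∈ P ∧ l ∈ P ∧ ∀ x ∈ M, x ∉ P

private lemma infix_pair_append {V : Type*} {v w : V} :
    ∀ {X : List V} {Y : List V}, [v, w] <:+: X ++ Y →
      [v, w] <:+: X ∨ [v, w] <:+: Y ∨ (X.getLast? = some v ∧ Y.head? = some w) := by
  intro X
  induction X with
  | nil => intro Y h; exact Or.inr (Or.inl h)
  | cons x X' ih =>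
    intro Y h
    rw [List.cons_append, List.infix_cons_iff] at h
    rcases h with h | h
    · rw [List.cons_prefix_cons] at h
      obtain ⟨rfl, hw⟩ := h
      cases X' with
      | nil =>
        refine Or.inr (Or.inr ⟨rfl, ?_⟩)
        simp only [List.nil_append] at hw
        rcases hw with ⟨T, hT⟩
        cases Y with
        | nil => simp at hT
        | cons y Y' =>
          simp only [List.cons_append, List.cons.injEq] at hT
          simp [hT.1]
      | cons x' X'' =>
        simp only [List.cons_append, List.cons_prefix_cons] at hw
        obtain ⟨rfl, -⟩ := hw
        exact Or.inl ⟨[], X'', rfl⟩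
    · rcases ih h with h' | h' | h'
      · exact Or.inl (List.infix_cons h')
      · exact Or.inr (Or.inl h')
      · refine Or.inr (Or.inr ⟨?_, h'.2⟩)
        cases X' with
        | nil => simp at h'
        | cons y X'' => rw [List.getLast?_cons_cons]; exact h'.1

private lemma extract_bypass {V : Type*} {E : V → V → Prop} {L : List V} {v w : V} :
    ∀ (n : ℕ) (P : List V), P.length ≤ n → P.Chain' E →
      (∀ a, P.head? = some a → a ∈ L) → (∀ l, P.getLast? = some l → l ∈ L) →
      [v, w] <:+: P → ∃ Q, IsBypass E L Q ∧ [v, w] <:+: Q := by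
  intro n
  induction n with
  | zero =>
    intro P hlen _ _ _ hinf
    obtain ⟨S, T, hST⟩ := hinf
    apply absurd hlen
    rw [← hST]
    simp
  | succ n ih =>
    intro P hlen hch hhd hlast hinf
    have hlen2 : 2 ≤ P.length := by
      obtain ⟨S, T, hST⟩ := hinf
      rw [← hST]; simp; omega
    cases P with
    | nil => simp at hlen2
    | cons a rest =>
    have hrest : rest ≠ [] := by
      intro h; rw [h] at hlen2; simp at hlen2
    obtain ⟨M, l, rfl⟩ : ∃ M l, rest = M ++ [l] :=
      ⟨rest.dropLast, rest.getLast hrest, (List.dropLast_append_getLast hrest).symm⟩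
    have haL : a ∈ L := hhd a rfl
    have hlL : l ∈ L := hlast l (by
      rw [show a :: (M ++ [l]) = (a :: M) ++ [l] by simp, List.getLast?_concat])
    by_cases hall : ∀ x ∈ M, x ∉ L
    · exact ⟨a :: (M ++ [l]), ⟨hch, a, l, M, rfl, haL, hlL, hall⟩, hinf⟩
    · push_neg at hall
      obtain ⟨x, hxM, hxL⟩ := hall
      obtain ⟨M₁, M₂, rfl⟩ := List.append_of_mem hxM
      have hsplit : a :: (M₁ ++ x :: M₂ ++ [l]) = (a :: M₁ ++ [x]) ++ (M₂ ++ [l]) := by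
        simp
      rw [hsplit] at hinf hch
      simp only [List.length_cons, List.length_append, List.length_singleton] at hlen
      rcases infix_pair_append hinf with h' | h' | h'
      · -- inside the left part  a :: M₁ ++ [x]
        refine ih (a :: M₁ ++ [x]) (by simp; omega)
          (hch.prefix (List.prefix_append _ _)) ?_ ?_ h'
        · intro a' ha'
          simp only [List.cons_append, List.head?_cons, Option.some.injEq] at ha'
          rwa [← ha']
        · intro l' hl'
          rw [show a :: M₁ ++ [x] = (a :: M₁) ++ [x] by simp, List.getLast?_concat,
            Option.some.injEq] at hl'
          rwa [← hl']
      · -- inside the right part; it is a suffix of x :: M₂ ++ [l]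
        refine ih (x :: (M₂ ++ [l])) (by simp; omega) ?_ ?_ ?_
          (h'.trans ⟨[x], [], by simp⟩)
        · exact hch.suffix ⟨a :: M₁, by simp⟩
        · intro a' ha'
          simp only [List.head?_cons, Option.some.injEq] at ha'
          rwa [← ha']
        · intro l' hl'
          rw [show x :: (M₂ ++ [l]) = (x :: M₂) ++ [l] by simp, List.getLast?_concat,
            Option.some.injEq] at hl'
          rwa [← hl']
      · -- straddling: v = x, w = head of M₂ ++ [l]
        obtain ⟨hv, hw⟩ := h'
        rw [show a :: M₁ ++ [x] = (a :: M₁) ++ [x] by simp, List.getLast?_concat,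
          Option.some.injEq] at hv
        obtain ⟨Z, hZ⟩ : ∃ Z, M₂ ++ [l] = w :: Z := by
          cases hM : M₂ ++ [l] with
          | nil => simp at hM
          | cons z Z =>
            rw [hM, List.head?_cons, Option.some.injEq] at hw
            exact ⟨Z, by rw [hw]⟩
        refine ih (x :: (M₂ ++ [l])) (by simp; omega) ?_ ?_ ?_ ?_
        · exact hch.suffix ⟨a :: M₁, by simp⟩
        · intro a' ha'
          simp only [List.head?_cons, Option.some.injEq] at ha'
          rwa [← ha']
        · intro l' hl'
          rw [show x :: (M₂ ++ [l]) = (x :: M₂) ++ [l] by simp, List.getLast?_concat,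
            Option.some.injEq] at hl'
          rwa [← hl']
        · exact ⟨[], Z, by rw [hZ, ← hv]; rfl⟩

private lemma chain'_restrict {V : Type*} {E : V → V → Prop} {v w : V} :
    ∀ {P : List V}, P.Chain' E → ¬ [v, w] <:+: P →
      P.Chain' (fun x y => E x y ∧ ¬(x = v ∧ y = w)) := by
  intro P
  induction P with
  | nil => intro _ _; exact List.isChain_nil
  | cons a P ih =>
    intro h hni
    cases P with
    | nil => exact List.isChain_singleton _
    | cons b rest =>
      simp only [List.Chain', List.isChain_cons_cons] at h ⊢
      refine ⟨⟨h.1, ?_⟩, ih h.2 fun hi => hni (List.infix_cons hi)⟩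
      rintro ⟨rfl, rfl⟩
      exact hni ⟨[], rest, rfl⟩

private lemma ragent_mem_t {V : Type*} {β r : ℝ} {E : V → V → Prop} {c : V → V → ℝ}
    {t u : V} {M : List V} {b : Bool} (h : RAgent β r E c t u M b) (hb : b = true) :
    t ∈ M := by
  induction h with
  | reach => exact List.mem_singleton_self t
  | quit _ _ => simp at hb
  | step _ _ _ _ _ ih => exact List.mem_cons_of_mem _ (ih hb)

private lemma ragent_restrict {V : Type*} {β r : ℝ} {E E' : V → V → Prop}
    {c : V → V → ℝ} {t : V} {L : List V}
    (hE' : ∀ x y, E' x y → E x y)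
    (hsafe : ∀ u P, u ∈ L → IsPathFrom E u t P → P.Chain' E') :
    ∀ {u M b}, RAgent β r E c t u M b → b = true → M <:+ L →
      RAgent β r E' c t u M b := by
  intro u M b h
  induction h with
  | reach => intro _ _; exact RAgent.reach
  | quit _ _ => intro hb; simp at hb
  | @step v' w' Q M' b' hne hpath hle hmin hrec ih =>
    intro hb hsuf
    have hvL : v' ∈ L := hsuf.subset List.mem_cons_self
    refine RAgent.step hne ⟨hsafe v' _ hvL hpath, hpath.2.1, hpath.2.2⟩ hle
      (fun P hP => hmin P ⟨hP.1.imp (fun {a b} hab => hE' a b hab), hP.2⟩) ?_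
    exact ih hb ((List.suffix_cons v' M').trans hsuf)

/-- Theorem 3(i): if `G*` is a minimal motivating subgraph and `P*` is the `s`-`t` path the
agent actually traverses in it, then every edge of `G*` lies on `P*` or on a `P*`-bypass. -/
theorem minimal_motivating_edges_on_bypass {V : Type*} (E : V → V → Prop)
    (c : V → V → ℝ) (β r : ℝ) (s t : V) (L : List V)
    (hβ0 : 0 < β) (hβ1 : β ≤ 1)
    (hpos : ∀ v w, E v w → 0 < c v w)
    (hmot : ∃ M, RAgent β r E c t s M true)
    (hmin : ∀ E' : V → V → Prop, (∀ x y, E' x y → E x y) → E' ≠ E →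
      ¬ ∃ M, RAgent β r E' c t s M true)
    (hL : RAgent β r E c t s L true) :
    ∀ v w, E v w →
      [v, w] <:+: L ∨ ∃ Q, IsBypass E L Q ∧ [v, w] <:+: Q := by
  intro v w hvw
  by_contra hcon
  push_neg at hcon
  obtain ⟨h1, h2⟩ := hcon
  have htL : t ∈ L := ragent_mem_t hL rfl
  set E' : V → V → Prop := fun x y => E x y ∧ ¬(x = v ∧ y = w) with hE'def
  have hsub : ∀ x y, E' x y → E x y := fun x y h => h.1
  have hneq : E' ≠ E := by
    intro h
    have hvw' : E' v w := h ▸ hvw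
    exact hvw'.2 ⟨rfl, rfl⟩
  have hsafe : ∀ u P, u ∈ L → IsPathFrom E u t P → P.Chain' E' := by
    intro u P hu hP
    apply chain'_restrict hP.1
    intro hinf
    obtain ⟨Q, hQ, hQi⟩ := extract_bypass (E := E) (L := L) P.length P le_rfl hP.1
      (fun a ha => by rw [hP.2.1, Option.some.injEq] at ha; rwa [← ha])
      (fun l hl => by rw [hP.2.2, Option.some.injEq] at hl; rwa [← hl]) hinf
    exact h2 Q hQ hQi
  exact hmin E' hsub hneq ⟨L, ragent_restrict hsub hsafe hL rfl (List.suffix_refl L)⟩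
end

section
/- If G* is a minimal motivating subgraph with traversed path P*, then every node of G* has at most one outgoing edge that does not lie on P*; i.e., the graph G* minus the edges of P* has maximum out-degree 1. -/
section Aux

variable {V : Type*}

/-- Edge relation with the single edge `(v, y)` deleted. -/
def Edel (E : V → V → Prop) (v y : V) : V → V → Prop :=
  fun a b => E a b ∧ ¬(a = v ∧ b = y)

theorem isPathFrom_mono_s15 {E E' : V → V → Prop} (h : ∀ x y, E' x y → E x y)
    {v t : V} {P : List V} (hp : IsPathFrom E' v t P) : IsPathFrom E v t P :=
  ⟨hp.1.imp h, hp.2.1, hp.2.2⟩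

theorem pathCost_append_cons (c : V → V → ℝ) :
    ∀ (A : List V) (v : V) (S : List V),
      pathCost c (A ++ v :: S) = pathCost c (A ++ [v]) + pathCost c (v :: S)
  | [], v, S => by simp [pathCost]
  | [a], v, S => by simp [pathCost]
  | a :: b :: A, v, S => by
      have ih := pathCost_append_cons c (b :: A) v S
      show c a b + pathCost c (b :: A ++ v :: S)
        = c a b + pathCost c (b :: A ++ [v]) + pathCost c (v :: S)
      rw [ih]; ring

theorem isPathFrom_suffix {E : V → V → Prop} {u t y : V} {B l : List V}
    (h : IsPathFrom E u t l) (hs : y :: B <:+ l) : IsPathFrom E y t (y :: B) := by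
  obtain ⟨hc, h1, h2⟩ := h
  refine ⟨hc.infix hs.isInfix, rfl, ?_⟩
  obtain ⟨A, rfl⟩ := hs
  rw [List.getLast?_append] at h2
  cases hB : (y :: B).getLast? with
  | none => simp at hB
  | some zz => rw [hB] at h2; simpa using h2

theorem chain'_pair {R : V → V → Prop} {l : List V} {p q : V}
    (h : l.Chain' R) (hi : [p, q] <:+: l) : R p q :=
  (List.isChain_cons_cons.mp (h.infix hi)).1

theorem chain'_strengthen {R S : V → V → Prop} :
    ∀ {l : List V}, l.Chain' R → (∀ p q, [p, q] <:+: l → S p q) → l.Chain' S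
  | [], _, _ => List.isChain_nil
  | [_], _, _ => List.isChain_singleton _
  | a :: b :: l, h, hs => by
      simp only [List.Chain'] at h ⊢
      rw [List.isChain_cons_cons] at h ⊢
      refine ⟨hs a b ⟨[], l, rfl⟩, chain'_strengthen h.2 fun p q hi => hs p q ?_⟩
      exact hi.trans (List.suffix_cons a (b :: l)).isInfix

theorem rAgent_head {β r : ℝ} {E : V → V → Prop} {c : V → V → ℝ} {t u : V}
    {L : List V} {b : Bool} (h : RAgent β r E c t u L b) : L.head? = some u := by
  cases h <;> rfl

theorem rAgent_chain {β r : ℝ} {E : V → V → Prop} {c : V → V → ℝ} {t u : V}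
    {L : List V} {b : Bool} (h : RAgent β r E c t u L b) : L.Chain' E := by
  induction h with
  | reach => exact List.isChain_singleton _
  | quit _ _ => exact List.isChain_singleton _
  | @step v w Q L b hvt hp hle hm ha ih =>
      simp only [List.Chain']
      rw [List.isChain_cons]
      refine ⟨?_, ih⟩
      intro yy hy
      rw [rAgent_head ha] at hy
      cases hy
      exact (List.isChain_cons_cons.mp hp.1).1

theorem exists_shortest [Fintype V] {E : V → V → Prop} {c : V → V → ℝ} {t x : V}
    {f : V → ℕ} (htopo : ∀ a b, E a b → f a < f b)
    (h : ∃ P, IsPathFrom E x t P) :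
    ∃ P, IsPathFrom E x t P ∧ ∀ P', IsPathFrom E x t P' → pathCost c P ≤ pathCost c P' := by
  haveI : IsIrrefl V (fun a b => f a < f b) := ⟨fun a => lt_irrefl _⟩
  haveI : IsTrans V (fun a b => f a < f b) := ⟨fun a b d h1 h2 => h1.trans h2⟩
  have hfin : {P : List V | IsPathFrom E x t P}.Finite := by
    apply (List.finite_length_le V (Fintype.card V)).subset
    intro P hP
    have hchain : P.Chain' (fun a b => f a < f b) := hP.1.imp (fun a b hab => htopo a b hab)
    have hnd : P.Nodup := (List.isChain_iff_pairwise.mp hchain).nodup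
    exact hnd.length_le_card
  obtain ⟨P, hP, hPmin⟩ := Set.exists_min_image _ (pathCost c) hfin h
  exact ⟨P, hP, hPmin⟩

theorem rAgent_transfer {β r : ℝ} {E E' : V → V → Prop} {c : V → V → ℝ} {t : V}
    (hsub : ∀ x y, E' x y → E x y)
    (H : ∀ u x (Q : List V), E' u x → IsPathFrom E u t (u :: x :: Q) →
      (∀ P, IsPathFrom E u t P →
        perceivedCost β c (u :: x :: Q) ≤ perceivedCost β c P) →
      ∃ Q', IsPathFrom E' u t (u :: x :: Q') ∧
        perceivedCost β c (u :: x :: Q') = perceivedCost β c (u :: x :: Q)) :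
    ∀ {u : V} {L : List V} {b : Bool}, RAgent β r E c t u L b →
      (∀ p q, [p, q] <:+: L → E' p q) → RAgent β r E' c t u L b := by
  intro u L b h
  induction h with
  | reach => intro _; exact .reach
  | quit hvt hq =>
      intro _; exact .quit hvt (fun P hP => hq P (isPathFrom_mono_s15 hsub hP))
  | @step v w Q L b hvt hp hle hm ha ih =>
      intro hedge
      have hw : L.head? = some w := rAgent_head ha
      have hE'vw : E' v w := by
        apply hedge
        cases L with
        | nil => simp at hw
        | cons a L' =>
            rw [List.head?_cons] at hw
            injection hw with hw
            subst hw
            exact ⟨[], L', rfl⟩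
      obtain ⟨Q', hQ'path, hQ'cost⟩ := H v w Q hE'vw hp hm
      refine .step hvt hQ'path (by rw [hQ'cost]; exact hle) ?_ (ih ?_)
      · intro P hP
        rw [hQ'cost]; exact hm P (isPathFrom_mono_s15 hsub hP)
      · intro p q hi
        exact hedge p q (hi.trans (List.suffix_cons v L).isInfix)

theorem del_contra {β r : ℝ} {E : V → V → Prop} {c : V → V → ℝ} {s t : V} {L : List V}
    (hmin : ∀ E' : V → V → Prop, (∀ x y, E' x y → E x y) → E' ≠ E →
      ¬ ∃ M, RAgent β r E' c t s M true)
    (hL : RAgent β r E c t s L true)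
    (v y : V) (hEy : E v y) (hny : ¬ ([v, y] <:+: L))
    (hfix : ∀ u x (Q : List V), ¬(u = v ∧ x = y) → IsPathFrom E u t (u :: x :: Q) →
      (∀ P, IsPathFrom E u t P →
        perceivedCost β c (u :: x :: Q) ≤ perceivedCost β c P) →
      ∃ Q', IsPathFrom (Edel E v y) u t (u :: x :: Q') ∧
        perceivedCost β c (u :: x :: Q') = perceivedCost β c (u :: x :: Q)) :
    False := by
  have hsub : ∀ a b, Edel E v y a b → E a b := fun a b h => h.1
  have hne : Edel E v y ≠ E := by
    intro h
    have : Edel E v y v y := by rw [h]; exact hEy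
    exact this.2 ⟨rfl, rfl⟩
  apply hmin (Edel E v y) hsub hne
  refine ⟨L, rAgent_transfer hsub ?_ hL ?_⟩
  · intro u x Q hE' hp hm
    exact hfix u x Q hE'.2 hp hm
  · intro p q hi
    refine ⟨chain'_pair (rAgent_chain hL) hi, ?_⟩
    rintro ⟨rfl, rfl⟩
    exact hny hi

theorem hfix_pathless {β : ℝ} {E : V → V → Prop} {c : V → V → ℝ} {t : V}
    (v y : V) (hno : ¬ ∃ P, IsPathFrom E y t P) :
    ∀ u x (Q : List V), ¬(u = v ∧ x = y) → IsPathFrom E u t (u :: x :: Q) →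
      (∀ P, IsPathFrom E u t P →
        perceivedCost β c (u :: x :: Q) ≤ perceivedCost β c P) →
      ∃ Q', IsPathFrom (Edel E v y) u t (u :: x :: Q') ∧
        perceivedCost β c (u :: x :: Q') = perceivedCost β c (u :: x :: Q) := by
  intro u x Q _ hp _
  refine ⟨Q, ⟨chain'_strengthen hp.1 ?_, hp.2.1, hp.2.2⟩, rfl⟩
  intro p q hi
  refine ⟨chain'_pair hp.1 hi, ?_⟩
  rintro ⟨rfl, rfl⟩
  obtain ⟨A, B, hAB⟩ := hi
  refine hno ⟨q :: B, isPathFrom_suffix hp ⟨A ++ [p], ?_⟩⟩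
  rw [← hAB]; simp

theorem hfix_reroute {β : ℝ} {E : V → V → Prop} {c : V → V → ℝ} {t : V} {f : V → ℕ}
    (hβ0 : 0 < β) (htopo : ∀ a b, E a b → f a < f b)
    (v y z : V) (hEz : E v z) (hzy : z ≠ y)
    (Pz : List V) (hPz : IsPathFrom E z t Pz)
    (hbound : ∀ P, IsPathFrom E y t P →
      c v z + pathCost c Pz ≤ c v y + pathCost c P) :
    ∀ u x (Q : List V), ¬(u = v ∧ x = y) → IsPathFrom E u t (u :: x :: Q) →
      (∀ P, IsPathFrom E u t P →
        perceivedCost β c (u :: x :: Q) ≤ perceivedCost β c P) →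
      ∃ Q', IsPathFrom (Edel E v y) u t (u :: x :: Q') ∧
        perceivedCost β c (u :: x :: Q') = perceivedCost β c (u :: x :: Q) := by
  intro u x Q hux hp hm
  by_cases havoid : ∀ p q, [p, q] <:+: (u :: x :: Q) → ¬(p = v ∧ q = y)
  · exact ⟨Q, ⟨chain'_strengthen hp.1
      (fun p q hi => ⟨chain'_pair hp.1 hi, havoid p q hi⟩), hp.2.1, hp.2.2⟩, rfl⟩
  push_neg at havoid
  obtain ⟨p, q, hi, rfl, rfl⟩ := havoid
  obtain ⟨A, B, hAB⟩ := hi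
  -- normalize the decomposition
  have hAB' : A ++ p :: q :: B = u :: x :: Q := by rw [← hAB]; simp
  clear hAB
  -- Pz is nonempty with head z
  obtain ⟨Rz, rfl⟩ : ∃ Rz, Pz = z :: Rz := by
    cases Pz with
    | nil => exact absurd hPz.2.1 (by simp)
    | cons a R =>
        have := hPz.2.1
        rw [List.head?_cons] at this
        injection this with this
        subst this
        exact ⟨R, rfl⟩
  -- suffix path from q (= y)
  have hyB : IsPathFrom E q t (q :: B) := by
    refine isPathFrom_suffix hp ⟨A ++ [p], ?_⟩
    rw [← hAB']; simp
  -- topological facts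
  haveI : IsIrrefl V (fun a b => f a < f b) := ⟨fun a => lt_irrefl _⟩
  haveI : IsTrans V (fun a b => f a < f b) := ⟨fun a b d h1 h2 => h1.trans h2⟩
  have hflt : (u :: x :: Q).Chain' (fun a b => f a < f b) :=
    hp.1.imp (fun a b hab => htopo a b hab)
  have hnd : (u :: x :: Q).Nodup := (List.isChain_iff_pairwise.mp hflt).nodup
  -- the rerouted path N = A ++ p :: z :: Rz
  set N : List V := A ++ p :: z :: Rz with hN
  -- chain facts about pieces
  have hcl : (u :: x :: Q).Chain' E := hp.1
  have hprefix : (A ++ [p]) <+: (u :: x :: Q) := ⟨q :: B, by rw [← hAB']; simp⟩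
  have hcA : (A ++ [p]).Chain' E := hcl.infix hprefix.isInfix
  have hqnotinA : q ∉ A ++ [p] := by
    intro hqmem
    have : (A ++ [p]) ++ (q :: B) = u :: x :: Q := by rw [← hAB']; simp
    rw [← this] at hnd
    rw [List.nodup_append] at hnd
    exact hnd.2.2 q hqmem q (by simp) rfl
  -- avoidance for A ++ [p]
  have hcA' : (A ++ [p]).Chain' (Edel E p q) := by
    refine chain'_strengthen hcA ?_
    intro a b hab
    refine ⟨chain'_pair hcA hab, ?_⟩
    rintro ⟨rfl, rfl⟩
    exact hqnotinA (hab.subset (by simp))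
  -- avoidance for z :: Rz
  have hcPz' : (z :: Rz).Chain' (Edel E p q) := by
    refine chain'_strengthen hPz.1 ?_
    intro a b hab
    refine ⟨chain'_pair hPz.1 hab, ?_⟩
    rintro ⟨rfl, rfl⟩
    have hamem : a ∈ z :: Rz := hab.subset (by simp)
    have hfpz : f a < f z := htopo _ _ hEz
    have hzchain : (z :: Rz).Chain' (fun a b => f a < f b) :=
      hPz.1.imp (fun a b h => htopo a b h)
    have hpw := List.isChain_iff_pairwise.mp hzchain
    rcases List.mem_cons.mp hamem with rfl | hmem
    · exact lt_irrefl _ hfpz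
    · have : f z < f a := (List.pairwise_cons.mp hpw).1 a hmem
      omega
  -- N is a path (both for E and Edel)
  have hElast : (u :: x :: Q).getLast? = some t := hp.2.2
  have hNlast : N.getLast? = some t := by
    have h1 : (z :: Rz).getLast? = some t := hPz.2.2
    rw [hN, List.getLast?_append, List.getLast?_cons_cons, h1]
    rfl
  have hjoin : ∀ (R' : V → V → Prop), R' p z → (A ++ [p]).Chain' R' →
      (z :: Rz).Chain' R' → N.Chain' R' := by
    intro R' hpz h1 h2
    have : N = (A ++ [p]) ++ (z :: Rz) := by rw [hN]; simp
    rw [this]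
    simp only [List.Chain']
    rw [List.isChain_append]
    refine ⟨h1, h2, ?_⟩
    intro a ha b hb
    have hA : (A ++ [p]).getLast? = some p := by
      rw [List.getLast?_append]; rfl
    rw [hA] at ha
    rw [List.head?_cons] at hb
    cases ha; cases hb
    exact hpz
  have hNchain : N.Chain' E := hjoin E hEz hcA hPz.1
  have hNchain' : N.Chain' (Edel E p q) :=
    hjoin _ ⟨hEz, fun h => hzy h.2⟩ hcA' hcPz'
  -- cost comparison
  have hcostN : pathCost c N = pathCost c (A ++ [p]) + (c p z + pathCost c (z :: Rz)) := by
    rw [hN, pathCost_append_cons]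
    rfl
  have hcostl : pathCost c (u :: x :: Q)
      = pathCost c (A ++ [p]) + (c p q + pathCost c (q :: B)) := by
    rw [← hAB', pathCost_append_cons]
    rfl
  have hble := hbound (q :: B) hyB
  have hNle : pathCost c N ≤ pathCost c (u :: x :: Q) := by
    rw [hcostN, hcostl]; linarith
  -- shape of N
  obtain ⟨QN, hsh⟩ : ∃ QN, N = u :: x :: QN := by
    rcases A with _ | ⟨a, A1⟩
    · rw [List.nil_append] at hAB'
      obtain ⟨rfl, rfl, rfl⟩ : p = u ∧ q = x ∧ B = Q := by simpa using hAB'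
      exact absurd ⟨rfl, rfl⟩ hux
    · rcases A1 with _ | ⟨b, A2⟩
      · obtain ⟨rfl, rfl, rfl⟩ : a = u ∧ p = x ∧ q :: B = Q := by simpa using hAB'
        exact ⟨z :: Rz, by simp [hN]⟩
      · obtain ⟨rfl, rfl, -⟩ : a = u ∧ b = x ∧ A2 ++ p :: q :: B = Q := by simpa using hAB'
        exact ⟨A2 ++ p :: z :: Rz, by simp [hN]⟩
  have hNpath : IsPathFrom E u t N := ⟨hNchain, by rw [hsh]; rfl, hNlast⟩
  have hperc := hm N hNpath
  rw [hsh] at hperc hNle hNchain' hNlast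
  have e1 : perceivedCost β c (u :: x :: QN) = c u x + β * pathCost c (x :: QN) := rfl
  have e2 : perceivedCost β c (u :: x :: Q) = c u x + β * pathCost c (x :: Q) := rfl
  have e3 : pathCost c (u :: x :: QN) = c u x + pathCost c (x :: QN) := rfl
  have e4 : pathCost c (u :: x :: Q) = c u x + pathCost c (x :: Q) := rfl
  have h2 : pathCost c (x :: QN) ≤ pathCost c (x :: Q) := by
    rw [e3, e4] at hNle; linarith
  have h3 : pathCost c (x :: Q) ≤ pathCost c (x :: QN) := by
    rw [e1, e2] at hperc
    nlinarith
  have heq : pathCost c (x :: QN) = pathCost c (x :: Q) := le_antisymm h2 h3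
  refine ⟨QN, ⟨hNchain', rfl, hNlast⟩, ?_⟩
  rw [e1, e2, heq]

end Aux

/-- Theorem 3(ii): if `G*` is a minimal motivating subgraph (a finite DAG) with traversed
path `P* = L`, then every node has at most one outgoing edge not lying on `P*`;
i.e. `G* − E(P*)` has maximum out-degree 1. -/
theorem minimal_motivating_offpath_outdegree_one {V : Type*} [Fintype V]
    (E : V → V → Prop) (c : V → V → ℝ) (β r : ℝ) (s t : V) (L : List V) (f : V → ℕ)
    (hβ0 : 0 < β) (hβ1 : β ≤ 1)
    (htopo : ∀ v w, E v w → f v < f w)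
    (hpos : ∀ v w, E v w → 0 < c v w)
    (hmot : ∃ M, RAgent β r E c t s M true)
    (hmin : ∀ E' : V → V → Prop, (∀ x y, E' x y → E x y) → E' ≠ E →
      ¬ ∃ M, RAgent β r E' c t s M true)
    (hL : RAgent β r E c t s L true) :
    ∀ v w w', E v w → E v w' →
      ¬ ([v, w] <:+: L) → ¬ ([v, w'] <:+: L) → w = w' := by
  intro v w w' hEw hEw' hnw hnw'
  by_contra hne
  by_cases hw' : ∃ P, IsPathFrom E w' t P
  · by_cases hw : ∃ P, IsPathFrom E w t P
    · obtain ⟨Pw, hPw, hPwmin⟩ := exists_shortest htopo hw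
      obtain ⟨Pw', hPw', hPw'min⟩ := exists_shortest (c := c) htopo hw'
      rcases le_total (c v w + pathCost c Pw) (c v w' + pathCost c Pw') with hcmp | hcmp
      · exact del_contra hmin hL v w' hEw' hnw'
          (hfix_reroute hβ0 htopo v w' w hEw (fun h => hne h) Pw hPw
            (fun P hP => le_trans hcmp (by linarith [hPw'min P hP])))
      · exact del_contra hmin hL v w hEw hnw
          (hfix_reroute hβ0 htopo v w w' hEw' (fun h => hne h.symm) Pw' hPw'
            (fun P hP => le_trans hcmp (by linarith [hPwmin P hP])))
    · exact del_contra hmin hL v w hEw hnw (hfix_pathless v w hw)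
  · exact del_contra hmin hL v w' hEw' hnw' (hfix_pathless v w' hw')
end

section
/- For a single task of cost c and reward r > c split into two steps of costs x and c − x performed by an agent with bias β: the agent completes the second step iff β ≥ (c−x)/r, and completes the first step (anticipating the second and the reward) iff β ≥ x/(x + r − c). Setting δ = r − c, the choice x = √(δr) − δ equalizes the two bottlenecks at 1 − √(δ/r) = 1 − √(1 − c/r), and this x minimizes the maximum of the two bottlenecks over x ∈ [0,c]. Hence with β uniform on [0,1], the maximum completion rate over two-step partitions is √(1 − c/r). -/
/-- Two-step partitioning of a task of cost `c` with reward `r > c` (`δ = r − c`): an agent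
with bias `β` completes the second step iff `β ≥ (c−x)/r` and the first step iff
`β ≥ x/(x+δ)`; the choice `x* = √(δr) − δ` lies in `[0,c]`, equalizes the two bottlenecks
at `1 − √(δ/r) = 1 − √(1 − c/r)`, and minimizes the maximum bottleneck over `x ∈ [0,c]`;
hence (with `β` uniform on `[0,1]`) the maximum completion rate is `√(1 − c/r)`. -/
theorem two_step_partition (c r δ xs : ℝ) (hc : 0 < c) (hcr : c < r)
    (hδ : δ = r - c) (hxs : xs = Real.sqrt (δ * r) - δ) :
    (∀ β x : ℝ, 0 ≤ x → x ≤ c → (c - x ≤ β * r ↔ (c - x) / r ≤ β)) ∧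
    (∀ β x : ℝ, 0 ≤ x → x ≤ c → (x + β * (c - x) ≤ β * r ↔ x / (x + δ) ≤ β)) ∧
    (0 ≤ xs ∧ xs ≤ c) ∧
    xs / (xs + δ) = 1 - Real.sqrt (δ / r) ∧
    (c - xs) / r = 1 - Real.sqrt (δ / r) ∧
    1 - Real.sqrt (δ / r) = 1 - Real.sqrt (1 - c / r) ∧
    (∀ x : ℝ, 0 ≤ x → x ≤ c →
      max (xs / (xs + δ)) ((c - xs) / r) ≤ max (x / (x + δ)) ((c - x) / r)) ∧
    1 - max (xs / (xs + δ)) ((c - xs) / r) = Real.sqrt (1 - c / r) := by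
  have hr : (0:ℝ) < r := hc.trans hcr
  have hδ0 : 0 < δ := by rw [hδ]; linarith
  set s := Real.sqrt (δ * r) with hs
  have hs0 : 0 < s := Real.sqrt_pos.mpr (by positivity)
  have hs2 : s * s = δ * r := Real.mul_self_sqrt (by positivity)
  have hδs : δ ≤ s := by
    have : δ = Real.sqrt (δ * δ) := by rw [Real.sqrt_mul_self hδ0.le]
    rw [this]; exact Real.sqrt_le_sqrt (by nlinarith)
  have hsr : s ≤ r := by
    have : r = Real.sqrt (r * r) := by rw [Real.sqrt_mul_self hr.le]
    rw [this]; exact Real.sqrt_le_sqrt (by nlinarith)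
  have hxs0 : 0 ≤ xs := by rw [hxs]; linarith
  have hxsc : xs ≤ c := by rw [hxs, hδ]; linarith
  -- √(δ/r) * s = δ and √(δ/r) * r = s
  have hq : Real.sqrt (δ / r) * s = δ := by
    rw [hs, ← Real.sqrt_mul (by positivity)]
    rw [show δ / r * (δ * r) = δ * δ by field_simp]
    exact Real.sqrt_mul_self hδ0.le
  have hq2 : Real.sqrt (δ / r) * r = s := by
    rw [show r = Real.sqrt (r * r) by rw [Real.sqrt_mul_self hr.le],
      ← Real.sqrt_mul (by positivity)]
    congr 1; field_simp; ring_nf; rw [Real.sqrt_sq hr.le]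
  have hxsδ : xs + δ = s := by rw [hxs]; ring
  have heq1 : xs / (xs + δ) = 1 - Real.sqrt (δ / r) := by
    rw [hxsδ, hxs, sub_div, div_self hs0.ne']
    congr 1
    exact ((eq_div_iff hs0.ne').mpr hq).symm
  have heq2 : (c - xs) / r = 1 - Real.sqrt (δ / r) := by
    rw [hxs, show c - (s - δ) = r - s by rw [hδ]; ring, sub_div, div_self hr.ne']
    congr 1
    exact ((eq_div_iff hr.ne').mpr hq2).symm
  have hδr : δ / r = 1 - c / r := by rw [hδ]; field_simp
  refine ⟨?_, ?_, ⟨hxs0, hxsc⟩, heq1, heq2, by rw [hδr], ?_, ?_⟩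
  · intro β x _ _
    rw [div_le_iff₀ hr]
  · intro β x hx0 hxc
    have hxd : 0 < x + δ := by linarith
    rw [div_le_iff₀ hxd]
    constructor <;> intro h <;> nlinarith [h]
  · intro x hx0 hxc
    rw [heq1, heq2, max_self]
    rcases le_total x xs with h | h
    · refine le_trans ?_ (le_max_right _ _)
      rw [← heq2]
      gcongr
    · refine le_trans ?_ (le_max_left _ _)
      rw [← heq1, hxsδ]
      have hxd : 0 < x + δ := by linarith
      rw [div_le_div_iff₀ hs0 hxd, hxs]
      nlinarith
  · rw [heq1, heq2, max_self, hδr]; ring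
end

section
/- For a task of cost c and reward r > c, γ = c/r, δ = r − c, and any k ≥ 1: the maximum completion rate over partitions of the task into k steps (with β uniform on [0,1]) is f_k(c) = (1 − γ)^{1/k}, achieved by a partition whose first step has cost x_k*(c) = δ^{(k−1)/k} r^{1/k} − δ; moreover in the optimal partition all k steps have the same bottleneck, equal to 1 − (1 − γ)^{1/k}. -/
open Finset in
lemma fin_filter_sum {k : ℕ} (n : ℕ) (g : ℕ → ℝ) :
    ∑ j ∈ (univ : Finset (Fin k)).filter (fun j => n ≤ j.val), g j.val
      = ∑ j ∈ Finset.Ico n k, g j := by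
  rw [Finset.sum_filter, Fin.sum_univ_eq_sum_range (fun j => if n ≤ j then g j else 0) k,
    ← Finset.sum_filter]
  congr 1
  ext j
  simp only [Finset.mem_filter, Finset.mem_range, Finset.mem_Ico]
  omega

lemma ico_telescope (q : ℕ → ℝ) {m n : ℕ} (h : m ≤ n) :
    ∑ j ∈ Finset.Ico m n, (q (j+1) - q j) = q n - q m := by
  rw [Finset.sum_Ico_eq_sub _ h, Finset.sum_range_sub, Finset.sum_range_sub]; ring

open Finset in
lemma fin_filter_lt_eq {k : ℕ} (i : Fin k) :
    (univ : Finset (Fin k)).filter (fun j => i < j)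
      = (univ : Finset (Fin k)).filter (fun j => i.val + 1 ≤ j.val) := by
  ext j
  simp only [Finset.mem_filter, Finset.mem_univ, true_and, Fin.lt_def]
  omega

open Finset Real in
theorem test_part1 (k : ℕ) (hk : 0 < k) (c r : ℝ)
    (hc : 0 < c) (hcr : c < r) :
    (∃ p : Fin k → ℝ, (∀ i, 0 ≤ p i) ∧ (∑ i, p i) = c ∧
      p ⟨0, hk⟩ = (r - c) ^ (((k : ℝ) - 1) / (k : ℝ)) * r ^ (1 / (k : ℝ)) - (r - c) ∧
      (∀ i : Fin k,
        p i / (r - ∑ j ∈ univ.filter (fun j => i < j), p j)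
          = 1 - (1 - c / r) ^ (1 / (k : ℝ)))) := by
  have hr : (0:ℝ) < r := hc.trans hcr
  set δ := r - c with hδdef
  have hδ : 0 < δ := by simp [hδdef]; linarith
  have hB : (1:ℝ) < r / δ := (one_lt_div hδ).2 (by linarith)
  have hB0 : (0:ℝ) < r / δ := by linarith
  have hKne : ((k:ℝ)) ≠ 0 := Nat.cast_ne_zero.2 hk.ne'
  have hK0 : (0:ℝ) < (k:ℝ) := Nat.cast_pos.2 hk
  set q : ℕ → ℝ := fun n => δ * (r/δ) ^ ((n:ℝ)/(k:ℝ)) with hq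
  have hq0 : q 0 = δ := by simp [hq]
  have hqk : q k = r := by
    simp only [hq, div_self hKne, Real.rpow_one]
    field_simp
  have hqpos : ∀ n, 0 < q n := fun n => mul_pos hδ (Real.rpow_pos_of_pos hB0 _)
  have hmono : ∀ n, q n ≤ q (n+1) := by
    intro n
    apply mul_le_mul_of_nonneg_left _ hδ.le
    apply Real.rpow_le_rpow_of_exponent_le hB.le
    gcongr
    push_cast; linarith
  have hxr : 1 - c/r = δ/r := by field_simp; exact hδdef.symm
  have hrat : ∀ n : ℕ, q n / q (n+1) = (1 - c/r) ^ (1/(k:ℝ)) := by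
    intro n
    rw [hxr]
    show (δ * (r/δ)^((n:ℝ)/(k:ℝ))) / (δ * (r/δ)^(((n+1:ℕ):ℝ)/(k:ℝ))) = (δ/r)^(1/(k:ℝ))
    rw [mul_div_mul_left _ _ hδ.ne', ← Real.rpow_sub hB0]
    have h2 : (n:ℝ)/(k:ℝ) - ((n+1:ℕ):ℝ)/(k:ℝ) = -(1/(k:ℝ)) := by
      push_cast; ring
    rw [h2, Real.rpow_neg hB0.le, ← Real.inv_rpow hB0.le, inv_div]
  refine ⟨fun i => q (i.val + 1) - q i.val, fun i => sub_nonneg.2 (hmono i.val), ?_, ?_, ?_⟩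
  · rw [Fin.sum_univ_eq_sum_range (fun n => q (n+1) - q n) k, Finset.sum_range_sub, hq0, hqk]
    simp [hδdef]
  · show q 1 - q 0 = δ ^ (((k:ℝ)-1)/(k:ℝ)) * r ^ (1/(k:ℝ)) - δ
    rw [hq0]
    have h1 : q 1 = δ * (r/δ) ^ (1/(k:ℝ)) := by simp [hq]
    rw [h1]
    congr 1
    rw [Real.div_rpow hr.le hδ.le]
    have h2 : ((k:ℝ)-1)/(k:ℝ) = 1 - 1/(k:ℝ) := by field_simp
    rw [h2, Real.rpow_sub hδ, Real.rpow_one]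
    field_simp
  · intro i
    have htail : ∑ j ∈ univ.filter (fun j => i < j), (q (j.val+1) - q j.val)
        = r - q (i.val + 1) := by
      rw [fin_filter_lt_eq i, fin_filter_sum (i.val+1) (fun m => q (m+1) - q m),
        ico_telescope q i.isLt, hqk]
    rw [htail]
    have : r - (r - q (i.val+1)) = q (i.val+1) := by ring
    rw [this, sub_div, div_self (hqpos _).ne', hrat]

open Finset Real in
theorem test_part2 (k : ℕ) (hk : 0 < k) (c r : ℝ)
    (hc : 0 < c) (hcr : c < r) :
    (∀ p : Fin k → ℝ, (∀ i, 0 ≤ p i) → (∑ i, p i) = c →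
      ∃ i : Fin k, 1 - (1 - c / r) ^ (1 / (k : ℝ))
        ≤ p i / (r - ∑ j ∈ univ.filter (fun j => i < j), p j)) := by
  intro p hp hsum
  by_contra hcon
  push_neg at hcon
  have hr : (0:ℝ) < r := hc.trans hcr
  have hx : (0:ℝ) < 1 - c/r := by
    have : c/r < 1 := (div_lt_one hr).2 hcr
    linarith
  set a : ℝ := (1 - c/r) ^ (1/(k:ℝ)) with hadef
  have ha0 : 0 < a := Real.rpow_pos_of_pos hx _
  set g : ℕ → ℝ := fun m => if h : m < k then p ⟨m, h⟩ else 0 with hg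
  have hg0 : ∀ m, 0 ≤ g m := by
    intro m; rw [hg]; dsimp only; split
    · exact hp _
    · exact le_refl _
  have hgp : ∀ j : Fin k, g j.val = p j := by
    intro j; rw [hg]; dsimp only; rw [dif_pos j.isLt]
  set D : ℕ → ℝ := fun n => r - ∑ j ∈ Finset.Ico n k, g j with hD
  have hD0 : D 0 = r - c := by
    rw [hD]; dsimp only
    rw [← Finset.range_eq_Ico, ← Fin.sum_univ_eq_sum_range g k]
    rw [Finset.sum_congr rfl (fun j _ => hgp j), hsum]
  have hDk : D k = r := by simp [hD]
  have hDge : ∀ n, r - c ≤ D n := by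
    intro n
    have h1 : ∑ j ∈ Finset.Ico n k, g j ≤ ∑ j ∈ Finset.Ico 0 k, g j := by
      apply Finset.sum_le_sum_of_subset_of_nonneg
      · apply Finset.Ico_subset_Ico (Nat.zero_le n) le_rfl
      · exact fun i _ _ => hg0 i
    have h2 : D 0 ≤ D n := by rw [hD]; dsimp only; linarith
    linarith [hD0 ▸ h2]
  have hstep : ∀ n, n < k → a * D (n+1) < D n := by
    intro n hn
    have hbot := hcon ⟨n, hn⟩
    have htail : ∑ j ∈ univ.filter (fun j => (⟨n, hn⟩ : Fin k) < j), p j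
        = ∑ j ∈ Finset.Ico (n+1) k, g j := by
      rw [fin_filter_lt_eq, ← Finset.sum_congr rfl (fun j _ => hgp j),
        fin_filter_sum (n+1) g]
    rw [htail] at hbot
    have hden : r - ∑ j ∈ Finset.Ico (n+1) k, g j = D (n+1) := by rw [hD]
    rw [hden] at hbot
    have hDpos : 0 < D (n+1) := lt_of_lt_of_le (by linarith) (hDge (n+1))
    rw [div_lt_iff₀ hDpos] at hbot
    have hsplit : D n = D (n+1) - p ⟨n, hn⟩ := by
      rw [hD]; dsimp only
      rw [Finset.sum_eq_sum_Ico_succ_bot hn g, hgp ⟨n, hn⟩]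
      ring
    rw [hsplit]
    nlinarith
  have key : ∀ m, m + 1 ≤ k → a ^ (m+1) * D (m+1) < D 0 := by
    intro m
    induction m with
    | zero => intro h; simpa using hstep 0 h
    | succ m ih =>
      intro h
      have h1 : a ^ (m+2) * D (m+2) = a ^ (m+1) * (a * D (m+2)) := by ring
      have h2 : a * D (m+2) < D (m+1) := hstep (m+1) (by omega)
      have h3 : a ^ (m+1) * (a * D (m+2)) < a ^ (m+1) * D (m+1) :=
        mul_lt_mul_of_pos_left h2 (pow_pos ha0 _)
      have h4 := ih (by omega)
      calc a ^ (m+1+1) * D (m+1+1) = a ^ (m+1) * (a * D (m+2)) := by ring_nf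
        _ < a ^ (m+1) * D (m+1) := h3
        _ < D 0 := h4
  obtain ⟨k', rfl⟩ : ∃ k', k = k' + 1 := ⟨k - 1, by omega⟩
  have hfin := key k' le_rfl
  have hak : a ^ (k'+1) = 1 - c/r := by
    rw [hadef, ← Real.rpow_natCast ((1 - c/r) ^ (1/((k'+1:ℕ):ℝ))) (k'+1),
      ← Real.rpow_mul hx.le]
    rw [one_div_mul_cancel (by positivity : ((k'+1:ℕ):ℝ) ≠ 0), Real.rpow_one]
  rw [hDk, hak, hD0] at hfin
  have : (1 - c/r) * r = r - c := by field_simp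
  linarith


open Finset in
/-- Optimal `k`-step partitioning of a task of cost `c` with reward `r > c`: the bottleneck
of step `i` of a partition `p` is `p i / (r − Σ_{j>i} p j)`.  There is a partition whose
first step costs `δ^{(k−1)/k} r^{1/k} − δ` (`δ = r − c`) in which every step has the same
bottleneck `1 − (1 − c/r)^{1/k}`; and every partition has some step with bottleneck at
least `1 − (1 − c/r)^{1/k}`, i.e. the maximum completion rate is `(1 − c/r)^{1/k}`. -/
theorem optimal_k_step_partition (k : ℕ) (hk : 0 < k) (c r : ℝ)
    (hc : 0 < c) (hcr : c < r) :
    (∃ p : Fin k → ℝ, (∀ i, 0 ≤ p i) ∧ (∑ i, p i) = c ∧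
      p ⟨0, hk⟩ = (r - c) ^ (((k : ℝ) - 1) / (k : ℝ)) * r ^ (1 / (k : ℝ)) - (r - c) ∧
      (∀ i : Fin k,
        p i / (r - ∑ j ∈ univ.filter (fun j => i < j), p j)
          = 1 - (1 - c / r) ^ (1 / (k : ℝ)))) ∧
    (∀ p : Fin k → ℝ, (∀ i, 0 ≤ p i) → (∑ i, p i) = c →
      ∃ i : Fin k, 1 - (1 - c / r) ^ (1 / (k : ℝ))
        ≤ p i / (r - ∑ j ∈ univ.filter (fun j => i < j), p j)) :=
  ⟨test_part1 k hk c r hc hcr, test_part2 k hk c r hc hcr⟩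
end
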